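/- Let y ∈ ℝ^N, let Z ∈ ℝ^{N×k} satisfy ZᵀZ = I, let λ₁ ≥ 0, λ₂ ≥ 0, and define the vector u ∈ ℝ^k by u_j = S((Zᵀy)_j, λ₂), where S(a, λ) = sign(a)·(|a| − λ)₊. If u ≠ 0, then the unique minimizer over θ ∈ ℝ^k of f(θ) = (1/2)‖y − Zθ‖₂² + λ₁‖θ‖₂ + λ₂‖θ‖₁ is θ̂ = (1 − λ₁/‖u‖₂)₊ · u; if ‖u‖₂ ≤ λ₁ (in particular if u = 0), the minimizer is θ̂ = 0. -/
import Mathlib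


/-- Euclidean norm of a vector in ℝ^n. -/
noncomputable def norm2 {n : ℕ} (v : Fin n → ℝ) : ℝ :=
  Real.sqrt (∑ i, v i ^ 2)

/-- The soft-threshold operator `S(a, λ) = sign(a)·(|a| − λ)₊`. -/
noncomputable def soft (a lam : ℝ) : ℝ :=
  Real.sign a * max (|a| - lam) 0

lemma norm2_nonneg {n : ℕ} (v : Fin n → ℝ) : 0 ≤ norm2 v := Real.sqrt_nonneg _

lemma norm2_sq {n : ℕ} (v : Fin n → ℝ) : norm2 v ^ 2 = ∑ i, v i ^ 2 :=
  Real.sq_sqrt (Finset.sum_nonneg fun i _ => sq_nonneg _)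

lemma norm2_smul {n : ℕ} (t : ℝ) (v : Fin n → ℝ) : norm2 (t • v) = |t| * norm2 v := by
  unfold norm2
  rw [← Real.sqrt_sq_eq_abs, ← Real.sqrt_mul (sq_nonneg t), Finset.mul_sum]
  congr 1; refine Finset.sum_congr rfl fun i _ => ?_
  simp [Pi.smul_apply, smul_eq_mul]; ring

lemma norm2_pos {n : ℕ} (v : Fin n → ℝ) (hv : v ≠ 0) : 0 < norm2 v := by
  obtain ⟨j, hj⟩ : ∃ j, v j ≠ 0 := by
    by_contra h; push_neg at h; exact hv (funext h)
  apply Real.sqrt_pos.2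
  have : 0 < v j ^ 2 := by positivity
  exact lt_of_lt_of_le this
    (Finset.single_le_sum (f := fun i => v i ^ 2) (fun i _ => sq_nonneg _) (Finset.mem_univ j))

lemma cs {n : ℕ} (u v : Fin n → ℝ) : ∑ i, u i * v i ≤ norm2 u * norm2 v :=
  Real.sum_mul_le_sqrt_mul_sqrt _ _ _

lemma soft_sub_abs_le (c lam : ℝ) (h : 0 ≤ lam) : |c - soft c lam| ≤ lam := by
  unfold soft
  rcases le_or_gt (|c|) lam with hc | hc
  · rw [max_eq_right (by linarith)]; simpa using hc
  · have hc0 : c ≠ 0 := by intro h0; simp [h0, abs_zero] at hc; linarith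
    rw [max_eq_left (by linarith)]
    have hs : Real.sign c * |c| = c := by
      rcases lt_or_gt_of_ne hc0 with h1 | h1
      · rw [Real.sign_of_neg h1, abs_of_neg h1]; ring
      · rw [Real.sign_of_pos h1, abs_of_pos h1]; ring
    have : c - Real.sign c * (|c| - lam) = Real.sign c * lam := by
      rw [mul_sub, hs]; ring
    rw [this, abs_mul]
    rcases lt_or_gt_of_ne hc0 with h1 | h1
    · simp [Real.sign_of_neg h1, abs_of_nonneg h]
    · simp [Real.sign_of_pos h1, abs_of_nonneg h]

lemma soft_mul (c lam : ℝ) (h : 0 ≤ lam) :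
    (c - soft c lam) * soft c lam = lam * |soft c lam| := by
  unfold soft
  rcases le_or_gt (|c|) lam with hc | hc
  · rw [max_eq_right (by linarith)]; simp
  · have hc0 : c ≠ 0 := by intro h0; simp [h0, abs_zero] at hc; linarith
    rw [max_eq_left (by linarith)]
    have hs : Real.sign c * |c| = c := by
      rcases lt_or_gt_of_ne hc0 with h1 | h1
      · rw [Real.sign_of_neg h1, abs_of_neg h1]; ring
      · rw [Real.sign_of_pos h1, abs_of_pos h1]; ring
    have hsign : Real.sign c * Real.sign c = 1 := by
      rcases lt_or_gt_of_ne hc0 with h1 | h1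
      · rw [Real.sign_of_neg h1]; ring
      · rw [Real.sign_of_pos h1]; ring
    have habs : |Real.sign c * (|c| - lam)| = |c| - lam := by
      rw [abs_mul, abs_of_nonneg (by linarith : (0:ℝ) ≤ |c| - lam)]
      rcases lt_or_gt_of_ne hc0 with h1 | h1
      · simp [Real.sign_of_neg h1]
      · simp [Real.sign_of_pos h1]
    rw [habs]
    have : c - Real.sign c * (|c| - lam) = Real.sign c * lam := by
      rw [mul_sub, hs]; ring
    rw [this]
    calc Real.sign c * lam * (Real.sign c * (|c| - lam))
        = (Real.sign c * Real.sign c) * (lam * (|c| - lam)) := by ring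
      _ = lam * (|c| - lam) := by rw [hsign]; ring

lemma expand_sq (N k : ℕ) (y : Fin N → ℝ) (Z : Matrix (Fin N) (Fin k) ℝ)
    (hZ : Z.transpose * Z = (1 : Matrix (Fin k) (Fin k) ℝ)) (θ : Fin k → ℝ) :
    ∑ i, (y i - Z.mulVec θ i) ^ 2
      = ∑ i, y i ^ 2 - 2 * ∑ j, Z.transpose.mulVec y j * θ j + ∑ j, θ j ^ 2 := by
  have h1 : ∑ i, Z.mulVec θ i ^ 2 = ∑ j, θ j ^ 2 := by
    have e1 : ∑ i, Z.mulVec θ i ^ 2 = dotProduct (Z.mulVec θ) (Z.mulVec θ) := by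
      simp [dotProduct, sq]
    rw [e1, Matrix.dotProduct_mulVec, ← Matrix.mulVec_transpose, Matrix.mulVec_mulVec, hZ,
      Matrix.one_mulVec]
    simp [dotProduct, sq]
  have h2 : ∑ i, y i * Z.mulVec θ i = ∑ j, Z.transpose.mulVec y j * θ j := by
    have e1 : ∑ i, y i * Z.mulVec θ i = dotProduct y (Z.mulVec θ) := rfl
    rw [e1, Matrix.dotProduct_mulVec, ← Matrix.mulVec_transpose]
    rfl
  calc ∑ i, (y i - Z.mulVec θ i) ^ 2
      = ∑ i, (y i ^ 2 - 2 * (y i * Z.mulVec θ i) + Z.mulVec θ i ^ 2) := by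
        apply Finset.sum_congr rfl; intros; ring
    _ = ∑ i, y i ^ 2 - 2 * ∑ i, y i * Z.mulVec θ i + ∑ i, Z.mulVec θ i ^ 2 := by
        rw [Finset.sum_add_distrib, Finset.sum_sub_distrib, Finset.mul_sum]
    _ = _ := by rw [h1, h2]

/-- The quadratic-plus-group-penalty core inequality over scalars. -/
lemma step_c (n S2 D T lam1 m : ℝ) (hlam1 : 0 ≤ lam1) (hcs : D ≤ n * T) (hT : 0 ≤ T) (hn : 0 ≤ n)
    (hm : m = max (1 - lam1 / n) 0) :
    (1/2) * (m^2 * n^2) - m * n^2 + lam1 * (m * n) + (1/2) * (S2 - 2*m*D + m^2*n^2)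
      ≤ (1/2) * S2 - D + lam1 * T := by
  by_cases hlt : lam1 < n
  · have hn0 : 0 < n := lt_of_le_of_lt hlam1 hlt
    have hmx : m = 1 - lam1 / n := by
      rw [hm, max_eq_left]; rw [sub_nonneg]; exact (div_le_one hn0).2 hlt.le
    have hdiv : lam1 / n * n = lam1 := div_mul_cancel₀ lam1 hn0.ne'
    have key : lam1 / n * D ≤ lam1 * T := by
      have h1 : lam1 / n * D ≤ lam1 / n * (n * T) :=
        mul_le_mul_of_nonneg_left hcs (by positivity)
      have h2 : lam1 / n * (n * T) = lam1 * T := by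
        rw [← mul_assoc, hdiv]
      linarith
    have expand : (1/2) * (m^2 * n^2) - m * n^2 + lam1 * (m * n)
        + (1/2) * (S2 - 2*m*D + m^2*n^2) - ((1/2) * S2 - D + lam1 * T)
        = (1 - lam1/n) * n * (lam1 - lam1/n * n) + lam1/n * D - lam1 * T := by
      rw [hmx]; ring
    rw [hdiv] at expand
    linarith
  · push_neg at hlt
    rcases eq_or_lt_of_le hn with hn0 | hn0
    · -- n = 0
      have hD : D ≤ 0 := by rw [← hn0] at hcs; linarith
      have hmn : m * n = 0 := by rw [← hn0]; ring
      have hn2 : n ^ 2 = 0 := by rw [← hn0]; ring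
      have hM : m ≤ 1 := by
        rw [hm, ← hn0]; simp
      nlinarith [mul_nonneg hlam1 hT]
    · -- 0 < n ≤ lam1, so m = 0
      have hmx : m = 0 := by
        rw [hm, max_eq_right]
        rw [sub_nonpos]
        rw [le_div_iff₀ hn0]; linarith
      rw [hmx]
      have : D ≤ lam1 * T := le_trans hcs (mul_le_mul_of_nonneg_right hlt hT)
      linarith

/-- Master inequality: the reduced objective at `θ̂ = (1-λ₁/‖u‖)₊ • u` plus half the squared
distance is at most the reduced objective at any `θ`. -/
lemma master (k : ℕ) (c u : Fin k → ℝ) (lam1 lam2 : ℝ)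
    (hlam1 : 0 ≤ lam1) (hlam2 : 0 ≤ lam2)
    (hu : ∀ j, u j = soft (c j) lam2) (θ : Fin k → ℝ) :
    (1/2) * ∑ j, ((max (1 - lam1 / norm2 u) 0) • u) j ^ 2
      - ∑ j, c j * ((max (1 - lam1 / norm2 u) 0) • u) j
      + lam1 * norm2 ((max (1 - lam1 / norm2 u) 0) • u)
      + lam2 * ∑ j, |((max (1 - lam1 / norm2 u) 0) • u) j|
      + (1/2) * ∑ j, (θ j - ((max (1 - lam1 / norm2 u) 0) • u) j) ^ 2
    ≤ (1/2) * ∑ j, θ j ^ 2 - ∑ j, c j * θ j + lam1 * norm2 θ + lam2 * ∑ j, |θ j| := by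
  set m := max (1 - lam1 / norm2 u) 0 with hm
  have hm0 : 0 ≤ m := le_max_right _ _
  simp only [Pi.smul_apply, smul_eq_mul]
  have hcu : ∀ j, |c j - u j| ≤ lam2 := fun j => by
    rw [hu j]; exact soft_sub_abs_le (c j) lam2 hlam2
  -- A : subgradient inequality at θ
  have hA : ∑ j, (c j - u j) * θ j ≤ lam2 * ∑ j, |θ j| := by
    rw [Finset.mul_sum]
    refine Finset.sum_le_sum fun j _ => ?_
    calc (c j - u j) * θ j ≤ |(c j - u j) * θ j| := le_abs_self _
      _ = |c j - u j| * |θ j| := abs_mul _ _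
      _ ≤ lam2 * |θ j| := mul_le_mul_of_nonneg_right (hcu j) (abs_nonneg _)
  -- B : equality at θ̂
  have hB : ∑ j, (c j - u j) * (m * u j) = lam2 * ∑ j, |m * u j| := by
    rw [Finset.mul_sum]
    refine Finset.sum_congr rfl fun j _ => ?_
    have hsm : (c j - u j) * u j = lam2 * |u j| := by
      have := soft_mul (c j) lam2 hlam2
      rw [← hu j] at this; exact this
    calc (c j - u j) * (m * u j) = m * ((c j - u j) * u j) := by ring
      _ = m * (lam2 * |u j|) := by rw [hsm]
      _ = lam2 * |m * u j| := by rw [abs_mul, abs_of_nonneg hm0]; ring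
  have eA : ∑ j, (c j - u j) * θ j = ∑ j, c j * θ j - ∑ j, u j * θ j := by
    rw [← Finset.sum_sub_distrib]
    refine Finset.sum_congr rfl fun j _ => by ring
  have eB : ∑ j, (c j - u j) * (m * u j)
      = ∑ j, c j * (m * u j) - ∑ j, u j * (m * u j) := by
    rw [← Finset.sum_sub_distrib]
    refine Finset.sum_congr rfl fun j _ => by ring
  have hn2 : ∑ j, u j ^ 2 = (norm2 u) ^ 2 := (norm2_sq u).symm
  have hs1 : ∑ j, (m * u j) ^ 2 = m^2 * (norm2 u)^2 := by
    rw [← hn2, Finset.mul_sum]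
    refine Finset.sum_congr rfl fun j _ => by ring
  have hs2 : ∑ j, u j * (m * u j) = m * (norm2 u)^2 := by
    rw [← hn2, Finset.mul_sum]
    refine Finset.sum_congr rfl fun j _ => by ring
  have hs3 : ∑ j, (θ j - m * u j) ^ 2
      = ∑ j, θ j ^ 2 - 2 * m * (∑ j, u j * θ j) + m^2 * (norm2 u)^2 := by
    have e : ∀ j, (θ j - m * u j) ^ 2
        = θ j ^ 2 - 2 * m * (u j * θ j) + m ^ 2 * u j ^ 2 := fun j => by ring
    rw [Finset.sum_congr rfl fun j _ => e j, Finset.sum_add_distrib, Finset.sum_sub_distrib,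
      ← Finset.mul_sum, ← Finset.mul_sum, hn2]
  have hnorm : norm2 (m • u) = m * norm2 u := by
    rw [norm2_smul, abs_of_nonneg hm0]
  have hnorm' : lam1 * norm2 (m • u) = lam1 * (m * norm2 u) := by rw [hnorm]
  have hcs : ∑ j, u j * θ j ≤ norm2 u * norm2 θ := cs u θ
  have hc0 := step_c (norm2 u) (∑ j, θ j ^ 2) (∑ j, u j * θ j) (norm2 θ) lam1 m
    hlam1 hcs (norm2_nonneg θ) (norm2_nonneg u) hm
  linarith [hA, hB, eA, eB, hs1, hs2, hs3, hnorm', hc0]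

/-- Orthonormal case, `ZᵀZ = I`: with `u_j = S((Zᵀy)_j, λ₂)`, if `u ≠ 0` then
the unique minimizer of `f(θ) = (1/2)‖y − Zθ‖₂² + λ₁‖θ‖₂ + λ₂‖θ‖₁` is
`θ̂ = (1 − λ₁/‖u‖₂)₊ · u`, and if `‖u‖₂ ≤ λ₁` the minimizer is `θ̂ = 0`. -/
theorem sparse_group_lasso_orthonormal_closed_form (N k : ℕ) (y : Fin N → ℝ)
    (Z : Matrix (Fin N) (Fin k) ℝ)
    (hZ : Z.transpose * Z = (1 : Matrix (Fin k) (Fin k) ℝ))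
    (lam1 lam2 : ℝ) (hlam1 : 0 ≤ lam1) (hlam2 : 0 ≤ lam2)
    (u : Fin k → ℝ) (hu : ∀ j, u j = soft (Z.transpose.mulVec y j) lam2) :
    (u ≠ 0 →
      ∀ θ : Fin k → ℝ, θ ≠ (max (1 - lam1 / norm2 u) 0) • u →
        (1 / 2) * norm2 (y - Z.mulVec ((max (1 - lam1 / norm2 u) 0) • u)) ^ 2
            + lam1 * norm2 ((max (1 - lam1 / norm2 u) 0) • u)
            + lam2 * ∑ j, |((max (1 - lam1 / norm2 u) 0) • u) j|
          < (1 / 2) * norm2 (y - Z.mulVec θ) ^ 2 + lam1 * norm2 θ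
            + lam2 * ∑ j, |θ j|)
      ∧ (norm2 u ≤ lam1 →
          ∀ θ : Fin k → ℝ,
            (1 / 2) * norm2 (y - Z.mulVec 0) ^ 2
                + lam1 * norm2 (0 : Fin k → ℝ)
                + lam2 * ∑ j, |(0 : Fin k → ℝ) j|
              ≤ (1 / 2) * norm2 (y - Z.mulVec θ) ^ 2 + lam1 * norm2 θ
                + lam2 * ∑ j, |θ j|) := by
  set c : Fin k → ℝ := Z.transpose.mulVec y with hc
  -- the objective decomposes as a constant plus the reduced objective
  have hF : ∀ θ : Fin k → ℝ,
      (1 / 2) * norm2 (y - Z.mulVec θ) ^ 2 + lam1 * norm2 θ + lam2 * ∑ j, |θ j|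
        = (1/2) * ∑ i, y i ^ 2
          + ((1/2) * ∑ j, θ j ^ 2 - ∑ j, c j * θ j + lam1 * norm2 θ
            + lam2 * ∑ j, |θ j|) := by
    intro θ
    have hexp := expand_sq N k y Z hZ θ
    have hy : norm2 (y - Z.mulVec θ) ^ 2 = ∑ i, (y i - Z.mulVec θ i) ^ 2 := by
      rw [norm2_sq]
      exact Finset.sum_congr rfl fun i _ => by rw [Pi.sub_apply]
    rw [hy, hexp]; ring
  set θh : Fin k → ℝ := (max (1 - lam1 / norm2 u) 0) • u with hθh
  have hmaster := master k c u lam1 lam2 hlam1 hlam2 hu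
  constructor
  · intro hu0 θ hθ
    have hpos : 0 < ∑ j, (θ j - θh j) ^ 2 := by
      obtain ⟨j, hj⟩ : ∃ j, θ j ≠ θh j := by
        by_contra h; push_neg at h; exact hθ (funext h)
      have h1 : 0 < (θ j - θh j) ^ 2 := by
        have : θ j - θh j ≠ 0 := sub_ne_zero.2 hj
        positivity
      exact lt_of_lt_of_le h1
        (Finset.single_le_sum (f := fun j => (θ j - θh j) ^ 2)
          (fun i _ => sq_nonneg _) (Finset.mem_univ j))
    have hM := hmaster θ
    rw [hF θ, hF θh]
    linarith
  · intro hn θ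
    have hzero : θh = 0 := by
      rcases eq_or_ne u 0 with h0 | h0
      · rw [hθh, h0, smul_zero]
      · have hnp : 0 < norm2 u := norm2_pos u h0
        have : 1 - lam1 / norm2 u ≤ 0 := by
          rw [sub_nonpos, le_div_iff₀ hnp]; linarith
        rw [hθh, max_eq_right this, zero_smul]
    have hM := hmaster θ
    rw [← hzero] at *
    rw [hF θ, hF θh]
    have hpos : 0 ≤ ∑ j, (θ j - θh j) ^ 2 :=
      Finset.sum_nonneg fun j _ => sq_nonneg _
    linarith
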